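/- Let (H, ‖·‖) be a separable Hilbert space endowed with a probability measure ℙ, and let Z, Z' be H-valued random variables with 𝔼‖Z‖² + 𝔼‖Z'‖² < ∞. Let B, B' be the uncentered covariance operators B : u ↦ 𝔼[⟨u, Z⟩ Z] and B' : u ↦ 𝔼[⟨u, Z'⟩ Z']. Then B and B' are trace class and ‖B − B'‖₁ ≤ (𝔼‖Z − Z'‖²)^{1/2} · ((𝔼‖Z‖²)^{1/2} + (𝔼‖Z'‖²)^{1/2}), where ‖·‖₁ denotes the trace norm. -/

import Mathlib

open scoped InnerProductSpace RealInnerProductSpace ENNReal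
open MeasureTheory

/-- The `n`-th singular value of an operator `A`, following Allahverdiev's
characterization: `σ_n(A) := inf {‖A - L‖ : L compact, rank L ≤ n - 1}`. -/
noncomputable def sval {H : Type*} [NormedAddCommGroup H] [InnerProductSpace ℝ H]
    (A : H →L[ℝ] H) (n : ℕ) : ℝ :=
  sInf {r : ℝ | ∃ L : H →L[ℝ] H, IsCompactOperator L ∧
    Module.rank ℝ (LinearMap.range (L : H →ₗ[ℝ] H)) ≤ ((n - 1 : ℕ) : Cardinal) ∧ r = ‖A - L‖}

/-- The trace norm `‖A‖₁ = Σ_{i=1}^∞ σ_i(A)`, valued in `ℝ≥0∞`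
(`A` is trace class iff this is finite). -/
noncomputable def traceNorm {H : Type*} [NormedAddCommGroup H] [InnerProductSpace ℝ H]
    (A : H →L[ℝ] H) : ℝ≥0∞ := ∑' i : ℕ, ENNReal.ofReal (sval A (i + 1))

/-!
The difference `T = B - B'` is the expectation of the self-adjoint finite-rank operators
`Z ⊗ Z - Z' ⊗ Z'`, hence compact and self-adjoint. Repeatedly splitting off an eigenvector whose
eigenvalue `λₙ` has modulus equal to the norm of what is left ("deflation") exhibits a rank-`n`
operator at distance `|λₙ|` from `T`, so `σₙ₊₁(T) ≤ |λₙ|`, and the eigenvectors are orthonormal;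
thus `‖T‖₁ ≤ ∑ |⟪eₙ, T eₙ⟫|` for an orthonormal family. Since
`⟪e, (z ⊗ z - z' ⊗ z') e⟫ = ⟪e, z - z'⟫ ⟪e, z + z'⟫`, Cauchy–Schwarz and Bessel's inequality bound
`∑ |⟪eᵢ, T eᵢ⟫|` by `𝔼[‖Z - Z'‖ ‖Z + Z'‖]`, and Cauchy–Schwarz and Minkowski in `L²` conclude.
Finiteness of `‖B‖₁` is the case `Z' = 0`.
-/

open InnerProductSpace

section RankOne
variable {H : Type*} [NormedAddCommGroup H] [InnerProductSpace ℝ H]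

lemma isCompactOperator_rankOne (x y : H) : IsCompactOperator (rankOne ℝ x y) := by
  rw [rankOne_def']
  exact (isCompactOperator_of_locallyCompactSpace_rng
    (ContinuousLinearMap.toSpanSingleton ℝ x)).comp_clm _

lemma isSelfAdjoint_rankOne_self [CompleteSpace H] (x : H) : IsSelfAdjoint (rankOne ℝ x x) :=
  adjoint_rankOne x x

lemma rank_range_sum_rankOne_le {ι : Type*} (s : Finset ι) (c : ι → ℝ) (x y : ι → H) :
    Module.rank ℝ (LinearMap.range ((∑ i ∈ s, c i • rankOne ℝ (x i) (y i) : H →L[ℝ] H) : H →ₗ[ℝ] H))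
      ≤ s.card := by
  classical
  have hle : LinearMap.range ((∑ i ∈ s, c i • rankOne ℝ (x i) (y i) : H →L[ℝ] H) : H →ₗ[ℝ] H)
      ≤ Submodule.span ℝ (s.image x : Set H) := by
    rintro _ ⟨z, rfl⟩
    simp only [ContinuousLinearMap.coe_coe, FunLike.coe_sum, Finset.sum_apply,
      FunLike.coe_smul, Pi.smul_apply, rankOne_apply]
    exact Submodule.sum_mem _ fun i hi => Submodule.smul_mem _ _ <| Submodule.smul_mem _ _ <|
      Submodule.subset_span (by simpa using ⟨i, hi, rfl⟩)
  calc _ ≤ _ := Submodule.rank_mono hle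
    _ ≤ (s.image x).card := rank_span_finset_le _
    _ ≤ s.card := by exact_mod_cast Finset.card_image_le

end RankOne

lemma sval_succ_le {H : Type*} [NormedAddCommGroup H] [InnerProductSpace ℝ H]
    {A L : H →L[ℝ] H} {n : ℕ} (hL : IsCompactOperator L)
    (hrank : Module.rank ℝ (LinearMap.range (L : H →ₗ[ℝ] H)) ≤ n) :
    sval A (n + 1) ≤ ‖A - L‖ :=
  csInf_le ⟨0, by rintro _ ⟨_, -, -, rfl⟩; positivity⟩ ⟨L, hL, by simpa using hrank, rfl⟩

lemma IsCompactOperator.exists_eigenvector_abs_eq_norm {H : Type*} [NormedAddCommGroup H]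
    [InnerProductSpace ℝ H] [CompleteSpace H] {T : H →L[ℝ] H}
    (hT : IsCompactOperator T) (hT' : IsSelfAdjoint T) (h0 : T ≠ 0) :
    ∃ μ : ℝ, ∃ u : H, μ ≠ 0 ∧ ‖u‖ = 1 ∧ T u = μ • u ∧ |μ| = ‖T‖ := by
  have hrad := T.spectralRadius_eq_nnnorm hT'
  have hne : (spectrum ℝ T).Nonempty := by
    by_contra h
    rw [Set.not_nonempty_iff_eq_empty] at h
    simp only [spectralRadius, h, Set.mem_empty_iff_false, iSup_false, iSup_bot] at hrad
    exact h0 (nnnorm_eq_zero.1 (ENNReal.coe_eq_zero.1 hrad.symm))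
  obtain ⟨μ, hμ, hμT⟩ := spectrum.exists_nnnorm_eq_spectralRadius_of_nonempty hne
  rw [hrad, ENNReal.coe_inj] at hμT
  have hμ0 : μ ≠ 0 := by
    rintro rfl
    exact h0 (nnnorm_eq_zero.1 (hμT.symm.trans nnnorm_zero))
  obtain ⟨v, hv⟩ := ((hT.hasEigenvalue_iff_mem_spectrum hμ0).2 hμ).exists_hasEigenvector
  refine ⟨μ, ‖v‖⁻¹ • v, hμ0, by simp [norm_smul, hv.2], ?_, ?_⟩
  · rw [map_smul, smul_comm, ← hv.apply_eq_smul]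
    rfl
  · rw [← Real.norm_eq_abs, ← coe_nnnorm, hμT, coe_nnnorm]

section Deflation
variable {H : Type*} [NormedAddCommGroup H] [InnerProductSpace ℝ H]

-- For compact self-adjoint `S` the fallback `(0, 0)` is taken only when `S = 0`.
open Classical in
noncomputable def topEigenpair (S : H →L[ℝ] H) : ℝ × H :=
  if h : ∃ p : ℝ × H, p.1 ≠ 0 ∧ ‖p.2‖ = 1 ∧ S p.2 = p.1 • p.2 ∧ |p.1| = ‖S‖ then h.choose else 0

noncomputable def deflate (S : H →L[ℝ] H) : H →L[ℝ] H :=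
  S - (topEigenpair S).1 • rankOne ℝ (topEigenpair S).2 (topEigenpair S).2

variable {S : H →L[ℝ] H}

lemma topEigenpair_spec (S : H →L[ℝ] H) :
    S (topEigenpair S).2 = (topEigenpair S).1 • (topEigenpair S).2 ∧
      ((topEigenpair S).1 ≠ 0 → ‖(topEigenpair S).2‖ = 1) ∧
      ((topEigenpair S).1 = 0 → (topEigenpair S).2 = 0) := by
  unfold topEigenpair
  split_ifs with h
  · obtain ⟨hμ, hu, hSu, -⟩ := h.choose_spec
    exact ⟨hSu, fun _ => hu, fun h0 => absurd h0 hμ⟩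
  · simp

lemma deflate_apply_topEigenpair_snd (S : H →L[ℝ] H) : deflate S (topEigenpair S).2 = 0 := by
  obtain ⟨hSu, hunit, hzero⟩ := topEigenpair_spec S
  by_cases hμ : (topEigenpair S).1 = 0
  · simp [deflate, hzero hμ]
  · simp [deflate, hSu, hunit hμ]

lemma isCompactOperator_deflate (hS : IsCompactOperator S) : IsCompactOperator (deflate S) :=
  hS.sub ((isCompactOperator_rankOne _ _).smul _)

variable [CompleteSpace H]

lemma abs_topEigenpair_fst (hS : IsCompactOperator S) (hS' : IsSelfAdjoint S) :
    |(topEigenpair S).1| = ‖S‖ := by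
  unfold topEigenpair
  split_ifs with h
  · exact h.choose_spec.2.2.2
  · by_cases hS0 : S = 0
    · simp [hS0]
    · obtain ⟨μ, u, hμ⟩ := hS.exists_eigenvector_abs_eq_norm hS' hS0
      exact absurd ⟨(μ, u), hμ⟩ h

lemma deflate_apply_of_apply_eq_zero (hS : IsSelfAdjoint S) {v : H} (hv : S v = 0) :
    deflate S v = 0 := by
  have : (topEigenpair S).1 * ⟪(topEigenpair S).2, v⟫_ℝ = 0 := by
    rw [← real_inner_smul_left, ← (topEigenpair_spec S).1, ← hS.adjoint_eq,
      ContinuousLinearMap.adjoint_inner_left, hv, inner_zero_right]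
  simp [deflate, hv, smul_smul, this]

lemma isSelfAdjoint_deflate (hS : IsSelfAdjoint S) : IsSelfAdjoint (deflate S) :=
  hS.sub (IsSelfAdjoint.smul (IsSelfAdjoint.all (topEigenpair S).1) (isSelfAdjoint_rankOne_self _))

end Deflation

section DeflationSequence
variable {H : Type*} [NormedAddCommGroup H] [InnerProductSpace ℝ H] {T : H →L[ℝ] H}

noncomputable def deflationPair (T : H →L[ℝ] H) (n : ℕ) : ℝ × H := topEigenpair (deflate^[n] T)

lemma deflate_iterate_eq_sub_sum (T : H →L[ℝ] H) (n : ℕ) :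
    deflate^[n] T = T - ∑ k ∈ Finset.range n,
      (deflationPair T k).1 • rankOne ℝ (deflationPair T k).2 (deflationPair T k).2 := by
  induction n with
  | zero => simp
  | succ n ih =>
    rw [Function.iterate_succ_apply', deflate, Finset.sum_range_succ, ← sub_sub, ← ih]
    rfl

lemma isCompactOperator_deflate_iterate (hT : IsCompactOperator T) (n : ℕ) :
    IsCompactOperator (deflate^[n] T) := by
  induction n with
  | zero => exact hT
  | succ n ih => rw [Function.iterate_succ_apply']; exact isCompactOperator_deflate ih

variable [CompleteSpace H]

lemma isSelfAdjoint_deflate_iterate (hT : IsSelfAdjoint T) (n : ℕ) :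
    IsSelfAdjoint (deflate^[n] T) := by
  induction n with
  | zero => exact hT
  | succ n ih => rw [Function.iterate_succ_apply']; exact isSelfAdjoint_deflate ih

lemma deflate_iterate_apply_deflationPair_snd (hT : IsSelfAdjoint T) {k n : ℕ} (hkn : k < n) :
    deflate^[n] T (deflationPair T k).2 = 0 := by
  induction n, hkn using Nat.le_induction with
  | base => rw [Function.iterate_succ_apply']; exact deflate_apply_topEigenpair_snd _
  | succ n _ ih =>
    rw [Function.iterate_succ_apply']
    exact deflate_apply_of_apply_eq_zero (isSelfAdjoint_deflate_iterate hT n) ih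

lemma inner_deflationPair_snd_eq_zero (hT : IsSelfAdjoint T) {k n : ℕ} (hkn : k < n) :
    ⟪(deflationPair T n).2, (deflationPair T k).2⟫_ℝ = 0 := by
  obtain ⟨hSe, -, hzero⟩ := topEigenpair_spec (deflate^[n] T)
  by_cases hμ : (deflationPair T n).1 = 0
  · simp [hzero hμ, deflationPair]
  · refine (mul_eq_zero.1 ?_).resolve_left hμ
    rw [← real_inner_smul_left, deflationPair, ← hSe,
      ← (isSelfAdjoint_deflate_iterate hT n).adjoint_eq, ContinuousLinearMap.adjoint_inner_left, deflate_iterate_apply_deflationPair_snd hT hkn,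
      inner_zero_right]

lemma deflationPair_snd_orthogonal (hT : IsSelfAdjoint T) :
    Pairwise fun m n => ⟪(deflationPair T m).2, (deflationPair T n).2⟫_ℝ = 0 := by
  intro m n hmn
  rcases hmn.lt_or_gt with h | h
  · rw [real_inner_comm]; exact inner_deflationPair_snd_eq_zero hT h
  · exact inner_deflationPair_snd_eq_zero hT h

lemma apply_deflationPair_snd (hT : IsSelfAdjoint T) (n : ℕ) :
    T (deflationPair T n).2 = (deflationPair T n).1 • (deflationPair T n).2 := by
  have h : deflate^[n] T (deflationPair T n).2 = (deflationPair T n).1 • (deflationPair T n).2 :=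
    (topEigenpair_spec _).1
  have hsum : (∑ k ∈ Finset.range n, (deflationPair T k).1 •
      rankOne ℝ (deflationPair T k).2 (deflationPair T k).2) (deflationPair T n).2 = 0 := by
    rw [sum_apply]
    refine Finset.sum_eq_zero fun k hk => ?_
    rw [smul_apply, rankOne_apply,
      deflationPair_snd_orthogonal hT (Finset.mem_range.1 hk).ne, zero_smul, smul_zero]
  rwa [deflate_iterate_eq_sub_sum, sub_apply, hsum, sub_zero] at h

lemma sval_succ_le_abs_deflationPair_fst (hT : IsCompactOperator T) (hT' : IsSelfAdjoint T)
    (n : ℕ) : sval T (n + 1) ≤ |(deflationPair T n).1| := by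
  have hL := deflate_iterate_eq_sub_sum T n
  rw [eq_sub_iff_add_eq, ← eq_sub_iff_add_eq'] at hL
  calc sval T (n + 1) ≤ ‖T - (T - deflate^[n] T)‖ := by
        refine sval_succ_le (hT.sub (isCompactOperator_deflate_iterate hT n)) ?_
        rw [← hL]
        simpa using rank_range_sum_rankOne_le (Finset.range n) _ _ _
    _ = |(deflationPair T n).1| := by
        rw [sub_sub_cancel]
        exact (abs_topEigenpair_fst (isCompactOperator_deflate_iterate hT n)
          (isSelfAdjoint_deflate_iterate hT' n)).symm

end DeflationSequence

theorem traceNorm_le_of_forall_orthonormal {H : Type*} [NormedAddCommGroup H]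
    [InnerProductSpace ℝ H] [CompleteSpace H] {T : H →L[ℝ] H}
    (hT : IsCompactOperator T) (hT' : IsSelfAdjoint T) {C : ℝ}
    (hC : ∀ (ι : Type) [Fintype ι] (e : ι → H), Orthonormal ℝ e → ∑ i, |⟪e i, T (e i)⟫_ℝ| ≤ C) :
    traceNorm T ≤ ENNReal.ofReal C := by
  set p := deflationPair T
  calc traceNorm T ≤ ∑' n, ENNReal.ofReal |(p n).1| :=
        ENNReal.tsum_le_tsum fun n =>
          ENNReal.ofReal_le_ofReal (sval_succ_le_abs_deflationPair_fst hT hT' n)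
    _ ≤ ENNReal.ofReal C := by
      refine ENNReal.tsum_le_of_sum_range_le fun N => ?_
      rw [← ENNReal.ofReal_sum_of_nonneg fun _ _ => abs_nonneg _]
      refine ENNReal.ofReal_le_ofReal ?_
      set s := (Finset.range N).filter fun n => (p n).1 ≠ 0
      have hunit : ∀ n : s, ‖(p n).2‖ = 1 := fun n =>
        (topEigenpair_spec _).2.1 (Finset.mem_filter.1 n.2).2
      calc ∑ n ∈ Finset.range N, |(p n).1| = ∑ n ∈ s, |(p n).1| :=
            (Finset.sum_filter_of_ne fun _ _ h => abs_ne_zero.1 h).symm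
        _ = ∑ n : s, |⟪(p n).2, T (p n).2⟫_ℝ| := by
            rw [← Finset.sum_coe_sort]
            refine Finset.sum_congr rfl fun n _ => ?_
            rw [apply_deflationPair_snd hT', real_inner_smul_right, real_inner_self_eq_norm_sq,
              hunit, one_pow, mul_one]
        _ ≤ C := hC s (fun n => (p n).2)
            ⟨hunit, fun m n hmn => deflationPair_snd_orthogonal hT' (Subtype.coe_ne_coe.2 hmn)⟩

section Orthonormal
variable {H : Type*} [NormedAddCommGroup H] [InnerProductSpace ℝ H]
  {ι : Type*} [Fintype ι] {e : ι → H}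

lemma Orthonormal.sum_abs_inner_mul_abs_inner_le (he : Orthonormal ℝ e) (x y : H) :
    ∑ i, |⟪e i, x⟫_ℝ| * |⟪e i, y⟫_ℝ| ≤ ‖x‖ * ‖y‖ := by
  have hbessel : ∀ z : H, √(∑ i, |⟪e i, z⟫_ℝ| ^ 2) ≤ ‖z‖ := fun z =>
    Real.sqrt_le_iff.2 ⟨norm_nonneg z, by
      simpa [Real.norm_eq_abs] using he.sum_inner_products_le z (s := Finset.univ)⟩
  calc ∑ i, |⟪e i, x⟫_ℝ| * |⟪e i, y⟫_ℝ|
      ≤ √(∑ i, |⟪e i, x⟫_ℝ| ^ 2) * √(∑ i, |⟪e i, y⟫_ℝ| ^ 2) := Real.sum_mul_le_sqrt_mul_sqrt _ _ _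
    _ ≤ ‖x‖ * ‖y‖ := mul_le_mul (hbessel x) (hbessel y) (Real.sqrt_nonneg _) (norm_nonneg x)

lemma Orthonormal.sum_abs_inner_rankOne_sub_le (he : Orthonormal ℝ e) (x y : H) :
    ∑ i, |⟪e i, (rankOne ℝ x x - rankOne ℝ y y) (e i)⟫_ℝ| ≤ ‖x - y‖ * ‖x + y‖ := by
  have hterm : ∀ i, |⟪e i, (rankOne ℝ x x - rankOne ℝ y y) (e i)⟫_ℝ| =
      |⟪e i, x - y⟫_ℝ| * |⟪e i, x + y⟫_ℝ| := fun i => by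
    rw [← abs_mul]
    congr 1
    simp only [sub_apply, rankOne_apply, inner_sub_right, inner_add_right, real_inner_smul_right,
      real_inner_comm (e i)]
    ring
  simpa only [hterm] using he.sum_abs_inner_mul_abs_inner_le (x - y) (x + y)

end Orthonormal

section SecondMoment
variable {Ω E : Type*} [MeasurableSpace Ω] {ℙ : Measure Ω} [NormedAddCommGroup E] {X Y : Ω → E}

lemma sqrt_integral_norm_sq_eq_eLpNorm (hX : MemLp X 2 ℙ) :
    √(∫ ω, ‖X ω‖ ^ 2 ∂ℙ) = (eLpNorm X 2 ℙ).toReal := by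
  rw [hX.eLpNorm_eq_integral_rpow_norm two_ne_zero ENNReal.ofNat_ne_top,
    ENNReal.toReal_ofReal (by positivity), Real.sqrt_eq_rpow]
  norm_num

lemma integral_norm_mul_norm_le (hX : MemLp X 2 ℙ) (hY : MemLp Y 2 ℙ) :
    ∫ ω, ‖X ω‖ * ‖Y ω‖ ∂ℙ ≤ √(∫ ω, ‖X ω‖ ^ 2 ∂ℙ) * √(∫ ω, ‖Y ω‖ ^ 2 ∂ℙ) := by
  have h := integral_mul_le_Lp_mul_Lq_of_nonneg Real.HolderConjugate.two_two
    (ae_of_all _ fun ω => norm_nonneg (X ω)) (ae_of_all _ fun ω => norm_nonneg (Y ω))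
    (by simpa using hX.norm) (by simpa using hY.norm)
  simpa [Real.sqrt_eq_rpow] using h

lemma sqrt_integral_norm_add_sq_le (hX : MemLp X 2 ℙ) (hY : MemLp Y 2 ℙ) :
    √(∫ ω, ‖X ω + Y ω‖ ^ 2 ∂ℙ) ≤ √(∫ ω, ‖X ω‖ ^ 2 ∂ℙ) + √(∫ ω, ‖Y ω‖ ^ 2 ∂ℙ) := by
  have hXY : √(∫ ω, ‖X ω + Y ω‖ ^ 2 ∂ℙ) = (eLpNorm (X + Y) 2 ℙ).toReal :=
    sqrt_integral_norm_sq_eq_eLpNorm (hX.add hY)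
  rw [hXY, sqrt_integral_norm_sq_eq_eLpNorm hX, sqrt_integral_norm_sq_eq_eLpNorm hY,
    ← ENNReal.toReal_add hX.2.ne hY.2.ne]
  exact ENNReal.toReal_mono (ENNReal.add_ne_top.2 ⟨hX.2.ne, hY.2.ne⟩)
    (eLpNorm_add_le hX.1 hY.1 one_le_two)

end SecondMoment

section OperatorIntegral
variable {Ω : Type*} [MeasurableSpace Ω] {ℙ : Measure Ω}

lemma isCompactOperator_integral [IsProbabilityMeasure ℙ] {E F : Type*} [NormedAddCommGroup E]
    [NormedSpace ℝ E] [NormedAddCommGroup F] [NormedSpace ℝ F] [CompleteSpace F]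
    {A : Ω → E →L[ℝ] F} (hA : Integrable A ℙ) (h : ∀ ω, IsCompactOperator (A ω)) :
    IsCompactOperator (∫ ω, A ω ∂ℙ : E →L[ℝ] F) :=
  (compactOperator (RingHom.id ℝ) E F).convex.integral_mem isClosed_setOfPred_isCompactOperator
    (ae_of_all _ h) hA

variable {H : Type*} [NormedAddCommGroup H] [InnerProductSpace ℝ H] [CompleteSpace H]
  {A : Ω → H →L[ℝ] H}

lemma isSelfAdjoint_integral [IsProbabilityMeasure ℙ] (hA : Integrable A ℙ)
    (h : ∀ ω, IsSelfAdjoint (A ω)) : IsSelfAdjoint (∫ ω, A ω ∂ℙ) :=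
  (selfAdjoint.submodule ℝ (H →L[ℝ] H)).convex.integral_mem
    (isClosed_eq continuous_star continuous_id) (ae_of_all _ h) hA

lemma sum_abs_inner_integral_apply_le {ι : Type*} [Fintype ι] (e : ι → H) (hA : Integrable A ℙ)
    {g : Ω → ℝ} (hg : Integrable g ℙ) (h : ∀ ω, ∑ i, |⟪e i, A ω (e i)⟫_ℝ| ≤ g ω) :
    ∑ i, |⟪e i, (∫ ω, A ω ∂ℙ) (e i)⟫_ℝ| ≤ ∫ ω, g ω ∂ℙ := by
  have hint : ∀ i, Integrable (fun ω => |⟪e i, A ω (e i)⟫_ℝ|) ℙ := fun i =>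
    ((hA.apply_continuousLinearMap (e i)).const_inner (e i)).abs
  calc ∑ i, |⟪e i, (∫ ω, A ω ∂ℙ) (e i)⟫_ℝ| = ∑ i, |∫ ω, ⟪e i, A ω (e i)⟫_ℝ ∂ℙ| := by
        simp_rw [ContinuousLinearMap.integral_apply hA,
          integral_inner (hA.apply_continuousLinearMap _)]
    _ ≤ ∑ i, ∫ ω, |⟪e i, A ω (e i)⟫_ℝ| ∂ℙ :=
        Finset.sum_le_sum fun i _ => abs_integral_le_integral_abs
    _ = ∫ ω, ∑ i, |⟪e i, A ω (e i)⟫_ℝ| ∂ℙ := (integral_finsetSum _ fun i _ => hint i).symm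
    _ ≤ ∫ ω, g ω ∂ℙ := integral_mono (integrable_finsetSum _ fun i _ => hint i) hg h

end OperatorIntegral

section Covariance
variable {Ω : Type*} [MeasurableSpace Ω] {ℙ : Measure Ω}
  {H : Type*} [NormedAddCommGroup H] [InnerProductSpace ℝ H] {X Y : Ω → H}

lemma MeasureTheory.MemLp.integrable_rankOne_self (hX : MemLp X 2 ℙ) :
    Integrable (fun ω => rankOne ℝ (X ω) (X ω)) ℙ := by
  refine ((memLp_two_iff_integrable_sq_norm hX.1).1 hX).mono'
    (((rankOne ℝ).continuous.clm_apply continuous_id).comp_aestronglyMeasurable hX.1)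
    (ae_of_all _ fun ω => ?_)
  simp [sq]

lemma integral_rankOne_self_apply (hX : MemLp X 2 ℙ) (u : H) :
    (∫ ω, rankOne ℝ (X ω) (X ω) ∂ℙ) u = ∫ ω, ⟪u, X ω⟫_ℝ • X ω ∂ℙ := by
  simp [ContinuousLinearMap.integral_apply hX.integrable_rankOne_self, real_inner_comm]

end Covariance

theorem traceNorm_sub_le_of_covariance {Ω : Type*} [MeasurableSpace Ω] {ℙ : Measure Ω}
    [IsProbabilityMeasure ℙ] {H : Type*} [NormedAddCommGroup H] [InnerProductSpace ℝ H]
    [CompleteSpace H] {X Y : Ω → H} (hX : MemLp X 2 ℙ) (hY : MemLp Y 2 ℙ) {B B' : H →L[ℝ] H}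
    (hB : ∀ u, B u = ∫ ω, ⟪u, X ω⟫_ℝ • X ω ∂ℙ) (hB' : ∀ u, B' u = ∫ ω, ⟪u, Y ω⟫_ℝ • Y ω ∂ℙ) :
    traceNorm (B - B') ≤ ENNReal.ofReal (√(∫ ω, ‖X ω - Y ω‖ ^ 2 ∂ℙ) *
      (√(∫ ω, ‖X ω‖ ^ 2 ∂ℙ) + √(∫ ω, ‖Y ω‖ ^ 2 ∂ℙ))) := by
  set A : Ω → H →L[ℝ] H := fun ω => rankOne ℝ (X ω) (X ω) - rankOne ℝ (Y ω) (Y ω)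
  have hA : Integrable A ℙ := hX.integrable_rankOne_self.sub hY.integrable_rankOne_self
  have hBA : B - B' = ∫ ω, A ω ∂ℙ := by
    ext u
    rw [integral_sub hX.integrable_rankOne_self hY.integrable_rankOne_self, sub_apply, sub_apply,
      hB, hB', integral_rankOne_self_apply hX, integral_rankOne_self_apply hY]
  rw [hBA]
  refine traceNorm_le_of_forall_orthonormal
    (isCompactOperator_integral hA fun ω =>
      (isCompactOperator_rankOne _ _).sub (isCompactOperator_rankOne _ _))
    (isSelfAdjoint_integral hA fun ω =>
      (isSelfAdjoint_rankOne_self _).sub (isSelfAdjoint_rankOne_self _))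
    fun ι _ e he => ?_
  calc ∑ i, |⟪e i, (∫ ω, A ω ∂ℙ) (e i)⟫_ℝ| ≤ ∫ ω, ‖X ω - Y ω‖ * ‖X ω + Y ω‖ ∂ℙ :=
        sum_abs_inner_integral_apply_le e hA ((hX.sub hY).norm.integrable_mul (hX.add hY).norm)
          fun ω => he.sum_abs_inner_rankOne_sub_le (X ω) (Y ω)
    _ ≤ √(∫ ω, ‖X ω - Y ω‖ ^ 2 ∂ℙ) * √(∫ ω, ‖X ω + Y ω‖ ^ 2 ∂ℙ) :=
        integral_norm_mul_norm_le (hX.sub hY) (hX.add hY)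
    _ ≤ _ := mul_le_mul_of_nonneg_left (sqrt_integral_norm_add_sq_le hX hY) (Real.sqrt_nonneg _)

theorem traceNorm_ne_top_of_covariance {Ω : Type*} [MeasurableSpace Ω] {ℙ : Measure Ω}
    [IsProbabilityMeasure ℙ] {H : Type*} [NormedAddCommGroup H] [InnerProductSpace ℝ H]
    [CompleteSpace H] {X : Ω → H} (hX : MemLp X 2 ℙ) {B : H →L[ℝ] H}
    (hB : ∀ u, B u = ∫ ω, ⟪u, X ω⟫_ℝ • X ω ∂ℙ) : traceNorm B ≠ ⊤ := by
  have h := traceNorm_sub_le_of_covariance hX MemLp.zero hB (B' := 0) (by simp)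
  rw [sub_zero] at h
  exact ne_top_of_le_ne_top ENNReal.ofReal_ne_top h

/-- Let `Z, Z'` be `H`-valued random variables with finite second moments
and let `B, B'` be their uncentered covariance operators, `B u = 𝔼[⟪u, Z⟫ Z]` and
`B' u = 𝔼[⟪u, Z'⟫ Z']`. Then `B` and `B'` are trace class and
`‖B − B'‖₁ ≤ (𝔼‖Z − Z'‖²)^{1/2} ((𝔼‖Z‖²)^{1/2} + (𝔼‖Z'‖²)^{1/2})`. -/
theorem covariance_trace_norm_lipschitz
    {H : Type*} [NormedAddCommGroup H] [InnerProductSpace ℝ H]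
    [CompleteSpace H] [TopologicalSpace.SeparableSpace H]
    [MeasurableSpace H] [BorelSpace H]
    {Ω : Type*} [MeasurableSpace Ω] (ℙ : Measure Ω) [IsProbabilityMeasure ℙ]
    (Z Z' : Ω → H) (hZm : Measurable Z) (hZ'm : Measurable Z')
    (hZ2 : Integrable (fun ω => ‖Z ω‖ ^ 2) ℙ)
    (hZ'2 : Integrable (fun ω => ‖Z' ω‖ ^ 2) ℙ)
    (B B' : H →L[ℝ] H)
    (hB : ∀ u : H, B u = ∫ ω, ⟪u, Z ω⟫_ℝ • Z ω ∂ℙ)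
    (hB' : ∀ u : H, B' u = ∫ ω, ⟪u, Z' ω⟫_ℝ • Z' ω ∂ℙ) :
    traceNorm B ≠ ⊤ ∧ traceNorm B' ≠ ⊤ ∧
    traceNorm (B - B') ≤ ENNReal.ofReal
      (Real.sqrt (∫ ω, ‖Z ω - Z' ω‖ ^ 2 ∂ℙ) *
        (Real.sqrt (∫ ω, ‖Z ω‖ ^ 2 ∂ℙ) + Real.sqrt (∫ ω, ‖Z' ω‖ ^ 2 ∂ℙ))) := by
  have hZ : MemLp Z 2 ℙ := (memLp_two_iff_integrable_sq_norm hZm.aestronglyMeasurable).2 hZ2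
  have hZ' : MemLp Z' 2 ℙ := (memLp_two_iff_integrable_sq_norm hZ'm.aestronglyMeasurable).2 hZ'2
  exact ⟨traceNorm_ne_top_of_covariance hZ hB, traceNorm_ne_top_of_covariance hZ' hB',
    traceNorm_sub_le_of_covariance hZ hZ' hB hB'⟩
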